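/- Let π : P → M be a principal G-bundle with representation ρ : G → GL(V), f ∈ L^k(V)^G a G-invariant k-linear form, and ψ_i ∈ Ω^{p_i}_hor(P; V)^G horizontal equivariant forms. If there exists a principal connection ω on P such that d_ω ψ_i = 0 for all i = 1,…,k, then the basic form f^{ψ₁,…,ψ_k} = f ∘ (ψ₁ ⊗_∧ ⋯ ⊗_∧ ψ_k) is closed: d(f^{ψ₁,…,ψ_k}) = 0. -/

import Mathlib

/-!
STATEMENT 7: If f ∈ L^k(V)^G is invariant and ψᵢ ∈ Ω^{pᵢ}_hor(P;V)^G satisfy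
d_ωψᵢ = 0 for some principal connection ω, then f^{ψ₁,…,ψ_k} is closed.
Axiomatized setting: P with tangent spaces T x; the exterior derivatives of
the ψᵢ and of f^{ψ₁,…,ψ_k} are given as data (dψ, dF), subject to the usual
Leibniz rule for d(f ∘ (ψ₁ ⊗_∧ ⋯ ⊗_∧ ψ_k)); invariance of f is taken in the
infinitesimal form of 1.2; d_ωψᵢ = 0 reads dψᵢ = −ρ'_∧(ω)ψᵢ. -/

noncomputable section

open scoped BigOperators

attribute [local instance 100] LieRing.ofAssociativeRing

variable {P : Type*} {T : P → Type*}
  [∀ x, AddCommGroup (T x)] [∀ x, Module ℝ (T x)]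
  {g V : Type*} [LieRing g] [LieAlgebra ℝ g]
  [AddCommGroup V] [Module ℝ V]

lemma blkIdx_lt {k : ℕ} (p : Fin k → ℕ) (i : Fin k) (j : Fin (p i)) :
    (∑ l ∈ Finset.Iio i, p l) + j.1 < ∑ l, p l := by
  have h1 : ∑ l ∈ Finset.Iio i, p l ≤ ∑ l ∈ Finset.univ.erase i, p l :=
    Finset.sum_le_sum_of_subset
      (fun l hl => Finset.mem_erase.2 ⟨(Finset.mem_Iio.1 hl).ne, Finset.mem_univ l⟩)
  have h2 : p i + ∑ l ∈ Finset.univ.erase i, p l = ∑ l, p l :=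
    Finset.add_sum_erase _ p (Finset.mem_univ i)
  have := j.2; omega

def blkIdx {k : ℕ} (p : Fin k → ℕ) (i : Fin k) (j : Fin (p i)) : Fin (∑ l, p l) :=
  ⟨(∑ l ∈ Finset.Iio i, p l) + j.1, blkIdx_lt p i j⟩

/-- `f ∘ (ψ₁ ⊗_∧ ⋯ ⊗_∧ ψ_k)` as a form on `P`. -/
def bigProdP {k : ℕ} (f : MultilinearMap ℝ (fun _ : Fin k => V) ℝ)
    (p : Fin k → ℕ) (ψ : ∀ (i : Fin k) (x : P), (Fin (p i) → T x) → V)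
    (x : P) : (Fin (∑ l, p l) → T x) → ℝ := fun u =>
  ((∏ l, ((p l).factorial : ℝ)))⁻¹ *
    ∑ σ : Equiv.Perm (Fin (∑ l, p l)),
      ((Equiv.Perm.sign σ : ℤ) : ℝ) *
        f (fun i => ψ i x (fun j => u (σ (blkIdx p i j))))

/-- The wedge-action `ρ'_∧(ω)ψ` of the connection form on a `V`-valued form. -/
def act1P (ρ' : g →ₗ⁅ℝ⁆ Module.End ℝ V) (ω : ∀ x : P, T x →ₗ[ℝ] g) (q : ℕ)
    (ψ : ∀ x : P, (Fin q → T x) → V) (x : P) : (Fin (q + 1) → T x) → V := fun u =>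
  ∑ j : Fin (q + 1), ((-1 : ℝ)) ^ (j : ℕ) •
    ρ' (ω x (u j)) (ψ x fun l => u (j.succAbove l))

/-- The family `ψ` with its `i₀`-th member replaced by the `(p i₀ + 1)`-form `χ`. -/
def updPsiP {k : ℕ} (p : Fin k → ℕ)
    (ψ : ∀ (i : Fin k) (x : P), (Fin (p i) → T x) → V) (i₀ : Fin k)
    (χ : ∀ x : P, (Fin (p i₀ + 1) → T x) → V) :
    ∀ (i : Fin k) (x : P), (Fin (Function.update p i₀ (p i₀ + 1) i) → T x) → V :=
  fun i x u =>
    if h : i = i₀ then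
      χ x (fun j => u (Fin.cast (by subst h; simp) j))
    else
      ψ i x (fun j => u (Fin.cast (by simp [Function.update_of_ne h]) j))

/-! Substituting `dψᵢ = -ρ'_∧(ω)ψᵢ` into the `i`-th Leibniz term and expanding by multilinearity
of `f` gives a signed sum over the slots `j` of the `i`-th block, where `ρ'(ω(u_j))` acts on the
`i`-th factor. Slot `j` sits at position `Sᵢ + j` (`Sᵢ = p₀ + ⋯ + p_{i-1}`); moving it to the
front by a cycle costs `(-1)^(Sᵢ + j)`, which cancels both `(-1)^j` and the Leibniz sign
`(-1)^Sᵢ`. So all `p i + 1` sums equal one alternating sum over permutations `σ` in which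
`ρ'(ω(u_{σ 0}))` acts on the `i`-th factor, and `(p i + 1) / (p i + 1)! = 1 / (p i)!` restores the
normalisation. Summing over `i`, the infinitesimal invariance of `f` kills every summand. -/

section BlockOffsets

variable {ι : Type*} [LinearOrder ι] [LocallyFiniteOrderBot ι]

lemma sum_Iio_add_le_sum_Iio (p : ι → ℕ) {a b : ι} (hab : a < b) :
    ∑ l ∈ Finset.Iio a, p l + p a ≤ ∑ l ∈ Finset.Iio b, p l := by
  rw [add_comm, ← Finset.sum_insert (s := Finset.Iio a) (by simp)]
  exact Finset.sum_le_sum_of_subset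
    (Finset.insert_subset (Finset.mem_Iio.2 hab) (Finset.Iio_subset_Iio hab.le))

lemma sum_Iio_update_of_le (p : ι → ℕ) {i l : ι} (hl : l ≤ i) (b : ℕ) :
    ∑ q ∈ Finset.Iio l, Function.update p i b q = ∑ q ∈ Finset.Iio l, p q :=
  Finset.sum_congr rfl fun _ hq =>
    Function.update_of_ne ((Finset.mem_Iio.1 hq).trans_le hl).ne _ _

lemma sum_Iio_update_succ_of_lt (p : ι → ℕ) {i l : ι} (hl : i < l) :
    ∑ q ∈ Finset.Iio l, Function.update p i (p i + 1) q = ∑ q ∈ Finset.Iio l, p q + 1 := by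
  rw [Finset.sum_update_of_mem (Finset.mem_Iio.2 hl), ← Finset.erase_eq,
    ← Finset.add_sum_erase (Finset.Iio l) p (Finset.mem_Iio.2 hl)]
  omega

lemma sum_Iio_add_le_sum [Fintype ι] (p : ι → ℕ) (i : ι) :
    ∑ l ∈ Finset.Iio i, p l + p i ≤ ∑ l, p l := by
  rw [add_comm, ← Finset.sum_insert (s := Finset.Iio i) (by simp)]
  exact Finset.sum_le_sum_of_subset (Finset.subset_univ _)

end BlockOffsets

lemma prod_factorial_update_succ {ι : Type*} [Fintype ι] [DecidableEq ι] (p : ι → ℕ) (i : ι) :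
    ∏ l, (Function.update p i (p i + 1) l).factorial = (p i + 1) * ∏ l, (p l).factorial := by
  simp only [Function.apply_update (fun _ n => Nat.factorial n)]
  rw [Finset.prod_update_of_mem (Finset.mem_univ i), Nat.factorial_succ, mul_assoc,
    Finset.prod_eq_mul_prod_sdiff_singleton_of_mem (Finset.mem_univ i) (fun l => (p l).factorial)]

lemma Fin.val_succAbove {n : ℕ} (c : Fin (n + 1)) (m : Fin n) :
    (c.succAbove m : ℕ) = if m.1 < c.1 then m.1 else m.1 + 1 := by
  rcases lt_or_ge m.1 c.1 with h | h
  · rw [Fin.succAbove_of_castSucc_lt _ _ (by simpa [Fin.lt_def] using h), if_pos h]; rfl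
  · rw [Fin.succAbove_of_le_castSucc _ _ (by simpa [Fin.le_def] using h), if_neg (by omega)]
    rfl

def grownBlkIdx {k : ℕ} (p : Fin k → ℕ) (i : Fin k) (t : Fin (p i + 1)) :
    Fin ((∑ l, p l) + 1) :=
  ⟨(∑ l ∈ Finset.Iio i, p l) + t, by have := sum_Iio_add_le_sum p i; omega⟩

section GrownBlock

variable {k : ℕ} (p : Fin k → ℕ) (i : Fin k)

lemma grownBlkIdx_succAbove (j : Fin (p i + 1)) (m : Fin (p i)) :
    grownBlkIdx p i (j.succAbove m) = (grownBlkIdx p i j).succAbove (blkIdx p i m) := by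
  ext
  simp only [grownBlkIdx, blkIdx, Fin.val_succAbove]
  split_ifs <;> omega

lemma cast_blkIdx_update_self (hc : ∑ l, Function.update p i (p i + 1) l = (∑ l, p l) + 1)
    (h : p i + 1 = Function.update p i (p i + 1) i) (t : Fin (p i + 1)) :
    Fin.cast hc (blkIdx (Function.update p i (p i + 1)) i (Fin.cast h t)) = grownBlkIdx p i t := by
  ext
  simp [blkIdx, grownBlkIdx, sum_Iio_update_of_le p le_rfl]

lemma cast_blkIdx_update_of_ne (hc : ∑ l, Function.update p i (p i + 1) l = (∑ l, p l) + 1)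
    {l : Fin k} (hl : l ≠ i) (h : p l = Function.update p i (p i + 1) l)
    (j : Fin (p i + 1)) (m : Fin (p l)) :
    Fin.cast hc (blkIdx (Function.update p i (p i + 1)) l (Fin.cast h m)) =
      (grownBlkIdx p i j).succAbove (blkIdx p l m) := by
  ext
  have := m.2
  have := j.2
  simp only [Fin.val_cast, blkIdx, grownBlkIdx, Fin.val_succAbove]
  rcases hl.lt_or_gt with hli | hil
  · have := sum_Iio_add_le_sum_Iio p hli
    rw [sum_Iio_update_of_le p hli.le]
    split_ifs <;> omega
  · have := sum_Iio_add_le_sum_Iio p hil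
    rw [sum_Iio_update_succ_of_lt p hil]
    split_ifs <;> omega

end GrownBlock

section ConnectionTerms

variable {k : ℕ} (f : MultilinearMap ℝ (fun _ : Fin k => V) ℝ) (ρ' : g →ₗ⁅ℝ⁆ Module.End ℝ V)
  (ω : ∀ x : P, T x →ₗ[ℝ] g) (p : Fin k → ℕ) (Ψ : ∀ (i : Fin k) (x : P), (Fin (p i) → T x) → V)
  (x : P)

def blockValues (v : Fin (∑ l, p l) → T x) (l : Fin k) : V :=
  Ψ l x (fun m => v (blkIdx p l m))

/-- `f` with `ρ'(ω(w c))` applied to its `i`-th argument, the forms `Ψ` eating the vectors of `w`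
other than `w c`, in order. -/
def connTerm (w : Fin ((∑ l, p l) + 1) → T x) (c : Fin ((∑ l, p l) + 1)) (i : Fin k) : ℝ :=
  let v := blockValues p Ψ x (fun t => w (c.succAbove t))
  f (Function.update v i (ρ' (ω x (w c)) (v i)))

lemma sum_connTerm_eq_zero
    (hf : ∀ (X : g) (v : Fin k → V), ∑ i : Fin k, f (Function.update v i (ρ' X (v i))) = 0)
    (w : Fin ((∑ l, p l) + 1) → T x) (c : Fin ((∑ l, p l) + 1)) :
    ∑ i, connTerm f ρ' ω p Ψ x w c i = 0 :=
  hf _ _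

lemma connTerm_comp_cycleRange (w : Fin ((∑ l, p l) + 1) → T x) (c : Fin ((∑ l, p l) + 1))
    (i : Fin k) :
    connTerm f ρ' ω p Ψ x (fun t => w (c.cycleRange t)) c i = connTerm f ρ' ω p Ψ x w 0 i := by
  simp only [connTerm, Fin.cycleRange_self, Fin.cycleRange_succAbove, Fin.succAbove_zero]

lemma sum_sign_mul_connTerm (u : Fin ((∑ l, p l) + 1) → T x) (c : Fin ((∑ l, p l) + 1))
    (i : Fin k) :
    ∑ σ : Equiv.Perm (Fin ((∑ l, p l) + 1)),
        ((Equiv.Perm.sign σ : ℤ) : ℝ) * connTerm f ρ' ω p Ψ x (fun t => u (σ t)) c i =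
      (-1) ^ (c : ℕ) * ∑ σ : Equiv.Perm (Fin ((∑ l, p l) + 1)),
        ((Equiv.Perm.sign σ : ℤ) : ℝ) * connTerm f ρ' ω p Ψ x (fun t => u (σ t)) 0 i := by
  rw [← Equiv.sum_comp (Equiv.mulRight c.cycleRange), Finset.mul_sum]
  refine Finset.sum_congr rfl fun σ _ => ?_
  rw [Equiv.coe_mulRight, Equiv.Perm.sign_mul, Fin.sign_cycleRange]
  have h := connTerm_comp_cycleRange f ρ' ω p Ψ x (fun t => u (σ t)) c i
  beta_reduce at h
  simp only [Equiv.Perm.coe_mul, Function.comp_apply, h]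
  push_cast
  ring

omit [∀ x, AddCommGroup (T x)] [∀ x, Module ℝ (T x)] [AddCommGroup V] [Module ℝ V] in
lemma updPsiP_blocks (i : Fin k) (χ : ∀ x : P, (Fin (p i + 1) → T x) → V)
    (hc : ∑ l, Function.update p i (p i + 1) l = (∑ l, p l) + 1)
    (w : Fin ((∑ l, p l) + 1) → T x) (j : Fin (p i + 1)) :
    (fun l => updPsiP p Ψ i χ l x
        (fun m => w (Fin.cast hc (blkIdx (Function.update p i (p i + 1)) l m)))) =
      Function.update (blockValues p Ψ x (fun t => w ((grownBlkIdx p i j).succAbove t))) i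
        (χ x (fun t => w (grownBlkIdx p i t))) := by
  funext l
  rcases eq_or_ne l i with rfl | hl
  · simp only [updPsiP, dif_pos, Function.update_self, cast_blkIdx_update_self]
  · simp only [updPsiP, dif_neg hl, Function.update_of_ne hl, blockValues,
      cast_blkIdx_update_of_ne p i hc hl _ j]

lemma apply_updPsiP_of_eq_neg_act1P (i : Fin k) (χ : ∀ x : P, (Fin (p i + 1) → T x) → V)
    (hχ : ∀ u, χ x u = - act1P ρ' ω (p i) (Ψ i) x u)
    (hc : ∑ l, Function.update p i (p i + 1) l = (∑ l, p l) + 1)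
    (w : Fin ((∑ l, p l) + 1) → T x) :
    f (fun l => updPsiP p Ψ i χ l x
        (fun m => w (Fin.cast hc (blkIdx (Function.update p i (p i + 1)) l m)))) =
      -∑ j : Fin (p i + 1), (-1) ^ (j : ℕ) * connTerm f ρ' ω p Ψ x w (grownBlkIdx p i j) i := by
  set F := fun l => updPsiP p Ψ i χ l x
    (fun m => w (Fin.cast hc (blkIdx (Function.update p i (p i + 1)) l m)))
  have hF : ∀ j a, Function.update F i a =
      Function.update (blockValues p Ψ x (fun t => w ((grownBlkIdx p i j).succAbove t))) i a :=
    fun j a => by simp only [F, updPsiP_blocks p Ψ x i χ hc w j, Function.update_idem]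
  have hFi : F i = χ x (fun t => w (grownBlkIdx p i t)) := by
    simp only [F, updPsiP_blocks p Ψ x i χ hc w 0, Function.update_self]
  rw [← Function.update_eq_self i F, hF 0, hFi, hχ, act1P,
    MultilinearMap.map_update_neg, MultilinearMap.map_update_sum]
  congr 1
  refine Finset.sum_congr rfl fun j _ => ?_
  rw [MultilinearMap.map_update_smul, smul_eq_mul, ← hF 0, hF j, connTerm]
  simp only [blockValues, ← grownBlkIdx_succAbove]

omit [∀ x, AddCommGroup (T x)] [∀ x, Module ℝ (T x)] in
lemma bigProdP_cast {q : Fin k → ℕ} (Φ : ∀ (i : Fin k) (x : P), (Fin (q i) → T x) → V)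
    {n : ℕ} (hc : ∑ l, q l = n) (u : Fin n → T x) :
    bigProdP f q Φ x (fun j => u (Fin.cast hc j)) =
      (∏ l, ((q l).factorial : ℝ))⁻¹ * ∑ σ : Equiv.Perm (Fin n),
        ((Equiv.Perm.sign σ : ℤ) : ℝ) *
          f (fun i => Φ i x (fun j => u (σ (Fin.cast hc (blkIdx q i j))))) := by
  unfold bigProdP
  congr 1
  refine Fintype.sum_equiv (finCongr hc).permCongr _ _ fun σ => ?_
  rw [Equiv.Perm.sign_permCongr]
  rfl

lemma leibnizTerm_eq (i : Fin k) (χ : ∀ x : P, (Fin (p i + 1) → T x) → V)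
    (hχ : ∀ u, χ x u = - act1P ρ' ω (p i) (Ψ i) x u)
    (hc : ∑ l, Function.update p i (p i + 1) l = (∑ l, p l) + 1)
    (u : Fin ((∑ l, p l) + 1) → T x) :
    (-1 : ℝ) ^ (∑ l ∈ Finset.Iio i, p l) *
        bigProdP f (Function.update p i (p i + 1)) (updPsiP p Ψ i χ) x
          (fun j => u (Fin.cast hc j)) =
      -((∏ l, ((p l).factorial : ℝ))⁻¹ * ∑ σ : Equiv.Perm (Fin ((∑ l, p l) + 1)),
        ((Equiv.Perm.sign σ : ℤ) : ℝ) * connTerm f ρ' ω p Ψ x (fun t => u (σ t)) 0 i) := by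
  set S := ∑ l ∈ Finset.Iio i, p l
  set X := ∑ σ : Equiv.Perm (Fin ((∑ l, p l) + 1)),
    ((Equiv.Perm.sign σ : ℤ) : ℝ) * connTerm f ρ' ω p Ψ x (fun t => u (σ t)) 0 i
  have hslot : ∀ j : Fin (p i + 1), (-1 : ℝ) ^ (j : ℕ) *
      ∑ σ : Equiv.Perm (Fin ((∑ l, p l) + 1)), ((Equiv.Perm.sign σ : ℤ) : ℝ) *
        connTerm f ρ' ω p Ψ x (fun t => u (σ t)) (grownBlkIdx p i j) i = (-1) ^ S * X := by
    intro j
    have hj : (-1 : ℝ) ^ (j : ℕ) * (-1) ^ (j : ℕ) = 1 := by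
      rw [← pow_add, Even.neg_one_pow ⟨_, rfl⟩]
    rw [sum_sign_mul_connTerm, show ((grownBlkIdx p i j : Fin _) : ℕ) = S + j from rfl, pow_add]
    linear_combination (-1) ^ S * X * hj
  have hC : ∏ l, ((Function.update p i (p i + 1) l).factorial : ℝ) =
      (p i + 1) * ∏ l, ((p l).factorial : ℝ) := by
    exact_mod_cast prod_factorial_update_succ p i
  have hS : (-1 : ℝ) ^ S * (-1) ^ S = 1 := by
    rw [← pow_add, Even.neg_one_pow ⟨_, rfl⟩]
  calc (-1 : ℝ) ^ S * bigProdP f (Function.update p i (p i + 1)) (updPsiP p Ψ i χ) x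
          (fun j => u (Fin.cast hc j))
      = (-1) ^ S * ((∏ l, ((Function.update p i (p i + 1) l).factorial : ℝ))⁻¹ *
          -∑ j : Fin (p i + 1), (-1) ^ (j : ℕ) * ∑ σ : Equiv.Perm (Fin ((∑ l, p l) + 1)),
            ((Equiv.Perm.sign σ : ℤ) : ℝ) *
              connTerm f ρ' ω p Ψ x (fun t => u (σ t)) (grownBlkIdx p i j) i) := by
        rw [bigProdP_cast, Finset.sum_congr rfl fun σ _ => congrArg _
          (apply_updPsiP_of_eq_neg_act1P f ρ' ω p Ψ x i χ hχ hc (fun t => u (σ t)))]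
        simp only [mul_neg, Finset.mul_sum, Finset.sum_neg_distrib]
        rw [Finset.sum_comm]
        exact congrArg _ (Finset.sum_congr rfl fun j _ => Finset.sum_congr rfl fun σ _ => by ring)
    _ = (-1) ^ S * ((∏ l, ((Function.update p i (p i + 1) l).factorial : ℝ))⁻¹ *
          -((p i + 1) * ((-1) ^ S * X))) := by
        simp only [hslot, Finset.sum_const, Finset.card_univ, Fintype.card_fin, nsmul_eq_mul]
        push_cast
        ring
    _ = -((∏ l, ((p l).factorial : ℝ))⁻¹ * X) := by
        have hp : ((p i : ℝ) + 1)⁻¹ * (p i + 1) = 1 := inv_mul_cancel₀ (by positivity)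
        rw [hC, mul_inv]
        linear_combination (-(-1) ^ S * (-1) ^ S * (∏ l, ((p l).factorial : ℝ))⁻¹ * X) * hp -
          (∏ l, ((p l).factorial : ℝ))⁻¹ * X * hS

end ConnectionTerms

theorem basic_form_closed {k : ℕ}
    (ρ' : g →ₗ⁅ℝ⁆ Module.End ℝ V)
    -- the invariant k-linear form (infinitesimal invariance, 1.2):
    (f : MultilinearMap ℝ (fun _ : Fin k => V) ℝ)
    (hf : ∀ (X : g) (v : Fin k → V),
      ∑ i : Fin k, f (Function.update v i (ρ' X (v i))) = 0)
    -- a principal connection: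
    (ω : ∀ x : P, T x →ₗ[ℝ] g)
    -- the forms ψᵢ and their exterior derivatives:
    (p : Fin k → ℕ) (ψ : ∀ (i : Fin k) (x : P), (T x) [⋀^Fin (p i)]→ₗ[ℝ] V)
    (dψ : ∀ (i : Fin k) (x : P), (Fin (p i + 1) → T x) → V)
    -- the exterior derivative of F = f^{ψ₁,…,ψ_k} and the Leibniz rule for it:
    (dF : ∀ x : P, (Fin ((∑ l, p l) + 1) → T x) → ℝ)
    (hLeib : ∀ (x : P) (u : Fin ((∑ l, p l) + 1) → T x),
      dF x u = ∑ i : Fin k, ((-1 : ℝ)) ^ (∑ l ∈ Finset.Iio i, p l) *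
        bigProdP f (Function.update p i (p i + 1))
          (updPsiP p (fun l x => ⇑(ψ l x)) i (dψ i)) x
          (fun j => u (Fin.cast
            (by rw [Finset.sum_update_of_mem (Finset.mem_univ i), ← Finset.erase_eq,
                  ← Finset.add_sum_erase Finset.univ p (Finset.mem_univ i)]
                omega) j)))
    -- d_ωψᵢ = 0, i.e. dψᵢ = −ρ'_∧(ω)ψᵢ :
    (htors : ∀ (i : Fin k) (x : P) (u : Fin (p i + 1) → T x),
      dψ i x u = - act1P ρ' ω (p i) (fun x => ⇑(ψ i x)) x u) :
    -- then f^{ψ₁,…,ψ_k} is closed: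
    ∀ (x : P) (u : Fin ((∑ l, p l) + 1) → T x), dF x u = 0 := by
  intro x u
  rw [hLeib x u, Finset.sum_congr rfl fun i _ =>
    leibnizTerm_eq f ρ' ω p (fun l x => ⇑(ψ l x)) x i (dψ i) (htors i x) _ u,
    Finset.sum_neg_distrib, ← Finset.mul_sum, Finset.sum_comm]
  simp only [← Finset.mul_sum, sum_connTerm_eq_zero f ρ' ω p _ x hf, mul_zero,
    Finset.sum_const_zero, neg_zero]

end
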